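/- Second-order term of the inverse transformation: if w_k = z_k - α P_k(z) with each P_k a polynomial of lower degree at least 2, then the inverse satisfies z_k = w_k + α P_k(w) + α^2 [P_k||P](w) + O(|α|^3 |w|^4), where P = (P_1,...,P_n). -/

import Mathlib

/-!
The inverse is the solution of the fixed-point equation `z = w + α Q(z)`, where
`Q = (P, P̄)` acts on the variables `(w, w̄)`, taken as a power series in `α` with polynomial
coefficients. The Picard iterates `Z₀ = w`, `Z_{j+1} = w + α Q(Z_j)` agree to order `α ^ j`
with all later ones, so their diagonal coefficients define a solution. Comparing the
coefficients of `α` and `α²` in the fixed-point equation gives `Q` and the first-order Taylor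
term `∑ᵤ ∂ᵤQ · Q_u`, which is the bracket `[P_k‖P]`. For the degrees, weight `α` by `-1` and the
variables by `1`: as `Q` has lower degree at least `2`, each iterate keeps the coefficient of
`α ^ t` in the `(t + 1)`-st power of the ideal of the variables.
-/

open MvPolynomial Complex

abbrev PolyN (n : ℕ) := MvPolynomial (Fin n ⊕ Fin n) ℂ

/-- Conjugate polynomial: conjugate coefficients and swap each variable `z_j` with `z̄_j`. -/
noncomputable def conjP {n : ℕ} (R : PolyN n) : PolyN n :=
  MvPolynomial.map (starRingEnd ℂ) (rename Sum.swap R)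

/-- The bracket `[R‖S]`: formal derivative of `R` along `ż_j = S_j`, `ż̄_j = conj (S_j)`. -/
noncomputable def bracket {n : ℕ} (R : PolyN n) (S : Fin n → PolyN n) : PolyN n :=
  ∑ j : Fin n, (pderiv (Sum.inl j) R * S j + pderiv (Sum.inr j) R * conjP (S j))

/-- Total degree of a monomial exponent. -/
def mdeg {σ : Type*} (m : σ →₀ ℕ) : ℕ := m.sum fun _ e => e

namespace MvPolynomial

section AevalPowerSeries

variable {σ R A : Type*} [CommSemiring R] [CommSemiring A] [Algebra R A]

theorem coeff_aeval_eq_of_coeff_eq {f g : σ → PowerSeries A} {t : ℕ}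
    (h : ∀ u, ∀ s ≤ t, PowerSeries.coeff s (f u) = PowerSeries.coeff s (g u))
    (p : MvPolynomial σ R) :
    ∀ s ≤ t, PowerSeries.coeff s (aeval f p) = PowerSeries.coeff s (aeval g p) := by
  induction p using MvPolynomial.induction_on with
  | C a => simp
  | add p q hp hq => intro s hs; simp [hp s hs, hq s hs]
  | mul_X p u hp =>
    intro s hs
    simp only [map_mul, aeval_X, PowerSeries.coeff_mul]
    refine Finset.sum_congr rfl fun x hx => ?_
    rw [Finset.HasAntidiagonal.mem_antidiagonal] at hx
    rw [hp x.1 (by omega), h u x.2 (by omega)]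

theorem constantCoeff_aeval (f : σ → PowerSeries A) (p : MvPolynomial σ R) :
    PowerSeries.constantCoeff (aeval f p) =
      aeval (fun u => PowerSeries.constantCoeff (f u)) p := by
  induction p using MvPolynomial.induction_on with
  | C a => simp [PowerSeries.algebraMap_apply]
  | add p q hp hq => simp [hp, hq]
  | mul_X p u hp => simp [hp]

theorem coeff_one_aeval [Fintype σ] (f : σ → PowerSeries A) (p : MvPolynomial σ R) :
    PowerSeries.coeff 1 (aeval f p) =
      ∑ u, aeval (fun w => PowerSeries.constantCoeff (f w)) (pderiv u p) *
        PowerSeries.coeff 1 (f u) := by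
  classical
  induction p using MvPolynomial.induction_on with
  | C a => simp [PowerSeries.algebraMap_apply]
  | add p q hp hq => simp only [map_add, hp, hq, add_mul, Finset.sum_add_distrib]
  | mul_X p u hp =>
    simp only [map_mul, aeval_X, PowerSeries.coeff_one_mul, hp, constantCoeff_aeval,
      Derivation.leibniz, pderiv_X, smul_eq_mul, Pi.single_apply, mul_ite, mul_one, mul_zero,
      apply_ite (aeval _), map_add, map_zero, ite_mul, zero_mul, add_mul, Finset.sum_add_distrib,
      Finset.sum_ite_eq, Finset.mem_univ, if_true, Finset.sum_mul]
    exact (add_comm _ _).trans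
      (congrArg₂ (· + ·) (mul_comm _ _) (Finset.sum_congr rfl fun _ _ => by ring))

end AevalPowerSeries

theorem X_mem_idealOfVars {σ R : Type*} [CommSemiring R] (i : σ) :
    (X i : MvPolynomial σ R) ∈ idealOfVars σ R :=
  Ideal.subset_span ⟨i, rfl⟩

theorem map_mem_pow_idealOfVars {σ τ R S : Type*} [CommSemiring R] [CommSemiring S]
    (φ : MvPolynomial σ R →+* MvPolynomial τ S) (hφ : ∀ i, φ (X i) ∈ idealOfVars τ S)
    {d : ℕ} {p : MvPolynomial σ R} (hp : p ∈ idealOfVars σ R ^ d) :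
    φ p ∈ idealOfVars τ S ^ d := by
  have hmap : (idealOfVars σ R).map φ ≤ idealOfVars τ S := by
    rw [Ideal.map_span, Ideal.span_le]
    rintro _ ⟨_, ⟨i, rfl⟩, rfl⟩
    exact hφ i
  exact Ideal.pow_right_mono hmap d (Ideal.map_pow φ _ d ▸ Ideal.mem_map_of_mem φ hp)

end MvPolynomial

namespace PowerSeries

variable {A : Type*} [CommSemiring A] (I : Ideal A)

/-- With `I` the ideal of the variables of a polynomial ring, membership in `powFiltration I d`
says that the coefficient of `α ^ t` has lower degree at least `t + d`. -/
def powFiltration (d : ℕ) : Submodule A (PowerSeries A) where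
  carrier := {F | ∀ t, coeff t F ∈ I ^ (t + d)}
  add_mem' hF hG t := by simpa using add_mem (hF t) (hG t)
  zero_mem' t := by simp
  smul_mem' a F hF t := by simpa using Ideal.mul_mem_left _ a (hF t)

variable {I}

theorem powFiltration_antitone : Antitone (powFiltration I) :=
  fun _ _ hde _ hF t => Ideal.pow_le_pow_right (by omega) (hF t)

instance : SetLike.GradedMonoid (powFiltration I) where
  one_mem t := by cases t <;> simp [coeff_one]
  mul_mem d e F G hF hG t := by
    rw [coeff_mul]
    refine Ideal.sum_mem _ fun x hx => ?_
    rw [Finset.HasAntidiagonal.mem_antidiagonal] at hx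
    have := Ideal.mul_mem_mul (hF x.1) (hG x.2)
    rw [← pow_add] at this
    exact Ideal.pow_le_pow_right (by omega) this

theorem C_mem_powFiltration {d : ℕ} {a : A} (ha : a ∈ I ^ d) : C a ∈ powFiltration I d := by
  rintro (_ | t)
  · simpa using ha
  · simp

theorem X_mul_mem_powFiltration {d : ℕ} {F : PowerSeries A} (hF : F ∈ powFiltration I (d + 1)) :
    X * F ∈ powFiltration I d := by
  rintro (_ | t)
  · simp
  · rw [coeff_succ_X_mul, add_right_comm]
    exact hF t

end PowerSeries

namespace MvPolynomial

theorem aeval_mem_powFiltration {σ R A : Type*} [CommSemiring R] [CommSemiring A] [Algebra R A]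
    {I : Ideal A} {d : ℕ} {p : MvPolynomial σ R} (hp : p ∈ idealOfVars σ R ^ d)
    {f : σ → PowerSeries A} (hf : ∀ u, f u ∈ PowerSeries.powFiltration I 1) :
    aeval f p ∈ PowerSeries.powFiltration I d := by
  rw [aeval_def, eval₂_eq]
  refine Submodule.sum_mem _ fun m hm => ?_
  have hprod : ∏ u ∈ m.support, f u ^ m u ∈ PowerSeries.powFiltration I m.degree := by
    simpa [Finsupp.degree_apply] using
      SetLike.prod_mem_graded _ (fun u => m u • 1) _ fun u _ => SetLike.pow_mem_graded (m u) (hf u)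
  rw [← Algebra.smul_def]
  exact Submodule.smul_of_tower_mem _ _
    (PowerSeries.powFiltration_antitone ((mem_pow_idealOfVars_iff d p).mp hp m hm) hprod)

section FormalInverse

variable {σ R : Type*} [CommSemiring R] (Q : σ → MvPolynomial σ R)

noncomputable def picardIterate : ℕ → σ → PowerSeries (MvPolynomial σ R)
  | 0 => fun v => PowerSeries.C (X v)
  | j + 1 => fun v => PowerSeries.C (X v) + PowerSeries.X * aeval (picardIterate j) (Q v)

noncomputable def formalInverse (v : σ) : PowerSeries (MvPolynomial σ R) :=
  PowerSeries.mk fun t => PowerSeries.coeff t (picardIterate Q t v)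

theorem picardIterate_zero (v : σ) : picardIterate Q 0 v = PowerSeries.C (X v) :=
  rfl

theorem picardIterate_succ (j : ℕ) (v : σ) :
    picardIterate Q (j + 1) v =
      PowerSeries.C (X v) + PowerSeries.X * aeval (picardIterate Q j) (Q v) :=
  rfl

theorem coeff_picardIterate_succ {s j : ℕ} (hs : s ≤ j) (v : σ) :
    PowerSeries.coeff s (picardIterate Q (j + 1) v) =
      PowerSeries.coeff s (picardIterate Q j v) := by
  induction j generalizing s v with
  | zero =>
    obtain rfl : s = 0 := by omega
    simp [picardIterate_succ, picardIterate_zero]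
  | succ j ih =>
    rcases s with _ | s
    · simp [picardIterate_succ]
    · rw [picardIterate_succ, picardIterate_succ]
      simp only [map_add, PowerSeries.coeff_succ_X_mul]
      rw [coeff_aeval_eq_of_coeff_eq (fun u r hr => ih (by omega) u) (Q v) s (by omega)]

theorem coeff_picardIterate_of_le {s j : ℕ} (hs : s ≤ j) (v : σ) :
    PowerSeries.coeff s (picardIterate Q j v) = PowerSeries.coeff s (formalInverse Q v) := by
  induction j, hs using Nat.le_induction with
  | base => simp [formalInverse]
  | succ j hsj ih => rw [coeff_picardIterate_succ Q hsj, ih]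

theorem formalInverse_eq (v : σ) :
    formalInverse Q v = PowerSeries.C (X v) + PowerSeries.X * aeval (formalInverse Q) (Q v) := by
  ext (_ | t)
  · simp [formalInverse, picardIterate_zero]
  · rw [← coeff_picardIterate_of_le Q le_rfl, picardIterate_succ]
    simp only [map_add, PowerSeries.coeff_succ_X_mul]
    rw [coeff_aeval_eq_of_coeff_eq (fun u r hr => coeff_picardIterate_of_le Q hr u) (Q v) t le_rfl]

theorem coeff_zero_formalInverse (v : σ) : PowerSeries.coeff 0 (formalInverse Q v) = X v := by
  rw [formalInverse_eq]
  simp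

theorem coeff_succ_formalInverse (t : ℕ) (v : σ) :
    PowerSeries.coeff (t + 1) (formalInverse Q v) =
      PowerSeries.coeff t (aeval (formalInverse Q) (Q v)) := by
  rw [formalInverse_eq]
  simp [PowerSeries.coeff_succ_X_mul]

theorem coeff_one_formalInverse (v : σ) : PowerSeries.coeff 1 (formalInverse Q v) = Q v := by
  rw [coeff_succ_formalInverse, PowerSeries.coeff_zero_eq_constantCoeff_apply,
    constantCoeff_aeval]
  simp [← PowerSeries.coeff_zero_eq_constantCoeff_apply, coeff_zero_formalInverse]

theorem coeff_two_formalInverse [Fintype σ] (v : σ) :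
    PowerSeries.coeff 2 (formalInverse Q v) = ∑ u, pderiv u (Q v) * Q u := by
  rw [coeff_succ_formalInverse, coeff_one_aeval]
  simp [← PowerSeries.coeff_zero_eq_constantCoeff_apply, coeff_zero_formalInverse,
    coeff_one_formalInverse]

variable {Q}

theorem picardIterate_mem_powFiltration (hQ : ∀ v, Q v ∈ idealOfVars σ R ^ 2) (j : ℕ) (v : σ) :
    picardIterate Q j v ∈ PowerSeries.powFiltration (idealOfVars σ R) 1 := by
  have hX u : PowerSeries.C (X u) ∈ PowerSeries.powFiltration (idealOfVars σ R) 1 :=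
    PowerSeries.C_mem_powFiltration ((pow_one (idealOfVars σ R)).symm ▸ X_mem_idealOfVars u)
  induction j generalizing v with
  | zero => exact hX v
  | succ j ih =>
    exact add_mem (hX v)
      (PowerSeries.X_mul_mem_powFiltration (aeval_mem_powFiltration (hQ v) ih))

theorem formalInverse_mem_powFiltration (hQ : ∀ v, Q v ∈ idealOfVars σ R ^ 2) (v : σ) :
    formalInverse Q v ∈ PowerSeries.powFiltration (idealOfVars σ R) 1 := fun t => by
  rw [← coeff_picardIterate_of_le Q le_rfl]
  exact picardIterate_mem_powFiltration hQ t v t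

end FormalInverse

end MvPolynomial

theorem conjP_mem_pow_idealOfVars {n d : ℕ} {p : PolyN n} (hp : p ∈ idealOfVars _ ℂ ^ d) :
    conjP p ∈ idealOfVars _ ℂ ^ d :=
  map_mem_pow_idealOfVars ((map (starRingEnd ℂ)).comp (rename Sum.swap).toRingHom)
    (fun i => by simpa using X_mem_idealOfVars i.swap) hp

/-- Second-order term of the inverse transformation: if `w_k = z_k - α P_k(z)` with each `P_k`
of lower degree at least 2, the formal inverse is
`z_k = w_k + α P_k(w) + α² [P_k‖P](w) + O(α³)` with all order-`α^t`, `t ≥ 3`, terms of lower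
degree at least 4. -/
theorem inverse_second_order (n : ℕ) (P : Fin n → PolyN n)
    (hP : ∀ k, ∀ m ∈ (P k).support, 2 ≤ mdeg m) (k : Fin n) :
    ∃ R : (Fin n ⊕ Fin n) → ℕ → PolyN n,
      (∀ v, R v 0 = X v) ∧
      (∀ k', R (Sum.inl k') 1 = P k') ∧
      (∀ k', R (Sum.inr k') 1 = conjP (P k')) ∧
      R (Sum.inl k) 2 = bracket (P k) P ∧
      (∀ t, 3 ≤ t → ∀ m ∈ (R (Sum.inl k) t).support, 4 ≤ mdeg m) ∧
      (∀ k' : Fin n,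
        PowerSeries.mk (R (Sum.inl k'))
            - PowerSeries.X * MvPolynomial.aeval (fun v => PowerSeries.mk (R v)) (P k')
          = PowerSeries.C (X (Sum.inl k') : PolyN n)) ∧
      (∀ k' : Fin n,
        PowerSeries.mk (R (Sum.inr k'))
            - PowerSeries.X * MvPolynomial.aeval (fun v => PowerSeries.mk (R v)) (conjP (P k'))
          = PowerSeries.C (X (Sum.inr k') : PolyN n)) := by
  set Q : Fin n ⊕ Fin n → PolyN n := Sum.elim P fun j => conjP (P j)
  have hQ : ∀ v, Q v ∈ idealOfVars _ ℂ ^ 2 := by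
    have hP' j : P j ∈ idealOfVars _ ℂ ^ 2 := (mem_pow_idealOfVars_iff 2 _).mpr (hP j)
    rintro (j | j)
    exacts [hP' j, conjP_mem_pow_idealOfVars (hP' j)]
  have hmk v : PowerSeries.mk (fun t => PowerSeries.coeff t (formalInverse Q v)) =
      formalInverse Q v := PowerSeries.ext fun t => PowerSeries.coeff_mk _ _
  refine ⟨fun v t => PowerSeries.coeff t (formalInverse Q v), coeff_zero_formalInverse Q,
    fun k' => coeff_one_formalInverse Q _, fun k' => coeff_one_formalInverse Q _, ?_,
    fun t ht m hm => ?_, fun k' => ?_, fun k' => ?_⟩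
  · change PowerSeries.coeff 2 (formalInverse Q (Sum.inl k)) = _
    rw [coeff_two_formalInverse, Fintype.sum_sum_type, bracket, Finset.sum_add_distrib]
    rfl
  · have := (mem_pow_idealOfVars_iff _ _).mp (formalInverse_mem_powFiltration hQ _ t) m hm
    exact le_trans (by omega) this
  all_goals
    simp only [hmk]
    exact sub_eq_of_eq_add (formalInverse_eq Q _)
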